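/- Let P = {p_1,…,p_n} be points each covered by at least one disk of a finite weighted disk set S. Define the dynamic program values: δ_0 = 0, and δ_i = min over disks s containing p_i of (w(s) + δ_{f(s,i)}), where f(s,i) is the largest index j < i with p_j ∉ s (or 0 if none). Then δ_n equals the minimum total weight of a subset S' ⊆ S such that every p_i belongs to some disk of S', provided that S is line-separable from P by a line with all disks being unit disks centered below the line and all points above it. -/

import Mathlib

/-!
Write `f(s, i)` for the last index before `i` missed by the disk `s`. Take a cover of
`p_1, …, p_i` and, among its disks containing `p_i`, one `s` with `f(s, i)` smallest. The other
disks still cover `p_1, …, p_{f(s, i)}`: if `p_j`, `j < f(s, i)`, were covered by `s` alone, a disk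
`t` of the cover containing `p_{f(s, i)}` would, by the crossing property for `j < f(s, i) < i`,
contain `p_i`, hence `f(s, i) < f(t, i)`, and the crossing property for `j < f(s, i) < f(t, i)`
would put `p_j` or `p_{f(t, i)}` into `t`. Conversely, adding `s` to a cover of
`p_1, …, p_{f(s, i)}` covers `p_1, …, p_i`; so `δ_i = opt_i` by strong induction.

Crossing property: if `s` contains `p_j` and `p_m` but not `p_f` (`j < f < m`) and `t` contains
`p_f`, then `t` contains `p_j` or `p_m`. Above the axis, lying in a disk centered below it means
lying under its upper arc, so otherwise the upper arcs of `s` and `t` would cross on both sides of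
`p_f`, at two points above the axis. But two circles of equal radius meeting in two points form a
rhombus with their centers, so the intersection points have the same midpoint as the centers,
which lies below the axis.
-/

open scoped Classical

/-- The dynamic-programming values: `δ_0 = 0` and
`δ_i = min_{s ∈ S, p_i ∈ s} (w(s) + δ_{f(s,i)})`, where `f(s,i)` is the largest
index `j < i` with `p_j ∉ s` (`0` if none). Here `mem i s` means that the point
`p_i` lies in the disk `s`. -/
noncomputable def deltaRec {ι : Type*} (S : Finset ι) (w : ι → ℝ)
    (mem : ℕ → ι → Prop) : ℕ → ℝ
  | 0 => 0
  | (i + 1) =>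
    sInf {x : ℝ | ∃ s ∈ S, mem (i + 1) s ∧
      x = w s + deltaRec S w mem (Nat.findGreatest (fun j => ¬ mem j s) i)}
  decreasing_by exact Nat.lt_succ_of_le (Nat.findGreatest_le i)

open Finset

section UpperArc

/-- Junk value: `b` outside `[a - ρ, a + ρ]`, where the square root vanishes. -/
noncomputable def upperArc (ρ a b x : ℝ) : ℝ := b + √(ρ ^ 2 - (x - a) ^ 2)

variable {ρ a b : ℝ}

lemma le_upperArc_iff {x y : ℝ} (hb : b < 0) (hy : 0 ≤ y) :
    y ≤ upperArc ρ a b x ↔ (x - a) ^ 2 + (y - b) ^ 2 ≤ ρ ^ 2 := by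
  rw [upperArc, ← sub_le_iff_le_add', Real.le_sqrt' (by linarith)]
  constructor <;> intro h <;> linarith

lemma sq_add_sq_upperArc_eq {x : ℝ} (h : b < upperArc ρ a b x) :
    (x - a) ^ 2 + (upperArc ρ a b x - b) ^ 2 = ρ ^ 2 := by
  have hpos : 0 < ρ ^ 2 - (x - a) ^ 2 := Real.sqrt_pos.1 (by rw [upperArc] at h; linarith)
  rw [upperArc, add_sub_cancel_left, Real.sq_sqrt hpos.le]
  ring

lemma continuous_upperArc : Continuous (upperArc ρ a b) := by
  unfold upperArc
  fun_prop

lemma upperArc_nonneg_of_mem_Icc {x₁ x x₃ : ℝ} (hb : b < 0) (hx : x ∈ Set.Icc x₁ x₃)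
    (h₁ : 0 ≤ upperArc ρ a b x₁) (h₃ : 0 ≤ upperArc ρ a b x₃) : 0 ≤ upperArc ρ a b x := by
  rw [le_upperArc_iff hb le_rfl] at h₁ h₃ ⊢
  rcases le_total x a with hxa | hxa
  · nlinarith [hx.1]
  · nlinarith [hx.2]

/-- The diagonals of the rhombus formed by the two intersection points and the two centers bisect
each other. -/
lemma add_eq_add_of_mem_two_circles {a' b' u v yu yv : ℝ} (hc : (a, b) ≠ (a', b')) (huv : u ≠ v)
    (hu : (u - a) ^ 2 + (yu - b) ^ 2 = ρ ^ 2) (hu' : (u - a') ^ 2 + (yu - b') ^ 2 = ρ ^ 2)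
    (hv : (v - a) ^ 2 + (yv - b) ^ 2 = ρ ^ 2) (hv' : (v - a') ^ 2 + (yv - b') ^ 2 = ρ ^ 2) :
    yu + yv = b + b' := by
  have hP : u - v ≠ 0 := sub_ne_zero.2 huv
  have h₁ : (a - a') * (u - v) + (b - b') * (yu - yv) = 0 := by
    linear_combination (-hu + hu' + hv - hv') / 2
  have h₂ : (a - a') * (u + v - a - a') + (b - b') * (yu + yv - b - b') = 0 := by
    linear_combination (-hu + hu' - hv + hv') / 2
  have h₃ : (u - v) * (u + v - a - a') + (yu - yv) * (yu + yv - b - b') = 0 := by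
    linear_combination hu - hv + h₁
  suffices (yu + yv - b - b') * ((u - v) ^ 2 + (yu - yv) ^ 2) = 0 by
    rcases mul_eq_zero.1 this with h | h
    · linarith
    · exact absurd h (by positivity)
  by_cases hb : b - b' = 0
  · have ha : a - a' ≠ 0 := fun ha => hc (by rw [sub_eq_zero.1 ha, sub_eq_zero.1 hb])
    have : (a - a') * (u - v) = 0 := by linear_combination h₁ - (yu - yv) * hb
    exact absurd (mul_eq_zero.1 this) (by tauto)
  · have h₄ : (b - b') * ((yu + yv - b - b') * (u - v) - (yu - yv) * (u + v - a - a')) = 0 := by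
      linear_combination (u - v) * h₂ - (u + v - a - a') * h₁
    have h₅ := (mul_eq_zero.1 h₄).resolve_left hb
    linear_combination (u - v) * h₅ + (yu - yv) * h₃

lemma upperArc_le_of_lt_of_lt {a' b' x₁ x₂ x₃ : ℝ} (hb : b < 0) (hb' : b' < 0)
    (h₁₂ : x₁ < x₂) (h₂₃ : x₂ < x₃)
    (h₁ : 0 ≤ upperArc ρ a b x₁) (h₃ : 0 ≤ upperArc ρ a b x₃)
    (h₁' : upperArc ρ a' b' x₁ < upperArc ρ a b x₁)
    (h₃' : upperArc ρ a' b' x₃ < upperArc ρ a b x₃) :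
    upperArc ρ a' b' x₂ ≤ upperArc ρ a b x₂ := by
  by_contra! h₂
  have hc : (a, b) ≠ (a', b') := by
    rintro ⟨⟩
    exact lt_irrefl _ h₂
  set g := fun x => upperArc ρ a b x - upperArc ρ a' b' x
  have hg : Continuous g := continuous_upperArc.sub continuous_upperArc
  have hg₁ : 0 < g x₁ := sub_pos.2 h₁'
  have hg₂ : g x₂ < 0 := sub_neg.2 h₂
  have hg₃ : 0 < g x₃ := sub_pos.2 h₃'
  obtain ⟨u, hu, hgu⟩ := intermediate_value_Icc' h₁₂.le hg.continuousOn ⟨hg₂.le, hg₁.le⟩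
  obtain ⟨v, hv, hgv⟩ := intermediate_value_Icc h₂₃.le hg.continuousOn ⟨hg₂.le, hg₃.le⟩
  simp only [g, sub_eq_zero] at hgu hgv
  have huv : u ≠ v := by
    rintro rfl
    rw [le_antisymm hu.2 hv.1] at hgu
    exact h₂.ne hgu
  have hu₀ : 0 ≤ upperArc ρ a b u :=
    upperArc_nonneg_of_mem_Icc hb ⟨hu.1, hu.2.trans h₂₃.le⟩ h₁ h₃
  have hv₀ : 0 ≤ upperArc ρ a b v :=
    upperArc_nonneg_of_mem_Icc hb ⟨h₁₂.le.trans hv.1, hv.2⟩ h₁ h₃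
  have hsum := add_eq_add_of_mem_two_circles hc huv
    (sq_add_sq_upperArc_eq (by linarith)) (by rw [hgu]; exact sq_add_sq_upperArc_eq (by linarith))
    (sq_add_sq_upperArc_eq (by linarith)) (by rw [hgv]; exact sq_add_sq_upperArc_eq (by linarith))
  linarith

end UpperArc

lemma dist_le_iff_le_upperArc {ρ : ℝ} {q c : EuclideanSpace ℝ (Fin 2)} (hρ : 0 ≤ ρ) (hc : c 1 < 0)
    (hq : 0 ≤ q 1) : dist q c ≤ ρ ↔ q 1 ≤ upperArc ρ (c 0) (c 1) (q 0) := by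
  rw [le_upperArc_iff hc hq, EuclideanSpace.dist_eq, Fin.sum_univ_two, Real.sqrt_le_left hρ]
  simp only [Real.dist_eq, sq_abs]

theorem dist_le_or_dist_le_of_between {ρ : ℝ} {c c' q₁ q₂ q₃ : EuclideanSpace ℝ (Fin 2)}
    (hc : c 1 < 0) (hc' : c' 1 < 0) (hq₁ : 0 ≤ q₁ 1) (hq₂ : 0 ≤ q₂ 1) (hq₃ : 0 ≤ q₃ 1)
    (h₁₂ : q₁ 0 < q₂ 0) (h₂₃ : q₂ 0 < q₃ 0) (h₁ : dist q₁ c ≤ ρ) (h₃ : dist q₃ c ≤ ρ)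
    (h₂ : ρ < dist q₂ c) (h₂' : dist q₂ c' ≤ ρ) : dist q₁ c' ≤ ρ ∨ dist q₃ c' ≤ ρ := by
  have hρ : 0 ≤ ρ := dist_nonneg.trans h₁
  rw [dist_le_iff_le_upperArc hρ hc hq₁] at h₁
  rw [dist_le_iff_le_upperArc hρ hc hq₃] at h₃
  rw [← not_le, dist_le_iff_le_upperArc hρ hc hq₂, not_le] at h₂
  rw [dist_le_iff_le_upperArc hρ hc' hq₂] at h₂'
  rw [dist_le_iff_le_upperArc hρ hc' hq₁, dist_le_iff_le_upperArc hρ hc' hq₃]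
  by_contra! h
  exact (upperArc_le_of_lt_of_lt hc hc' h₁₂ h₂₃ (hq₁.trans h₁) (hq₃.trans h₃)
    (h.1.trans_le h₁) (h.2.trans_le h₃)).not_gt (h₂.trans_le h₂')

section Cover

variable {ι : Type*} (S : Finset ι) (w : ι → ℝ) (mem : ℕ → ι → Prop)

def Covers (S' : Finset ι) (k : ℕ) : Prop := ∀ i, 1 ≤ i → i ≤ k → ∃ s ∈ S', mem i s

noncomputable def minCoverWeight (k : ℕ) : ℝ :=
  sInf {x : ℝ | ∃ S' : Finset ι, S' ⊆ S ∧ Covers mem S' k ∧ x = ∑ s ∈ S', w s}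

def HasCrossingProperty (n : ℕ) : Prop :=
  ∀ s ∈ S, ∀ t ∈ S, ∀ j f m, 1 ≤ j → j < f → f < m → m ≤ n →
    mem j s → mem m s → ¬ mem f s → mem f t → mem j t ∨ mem m t

variable {S w mem}

lemma Covers.mono {S' : Finset ι} {k l : ℕ} (h : Covers mem S' k) (hlk : l ≤ k) :
    Covers mem S' l :=
  fun i hi hil => h i hi (hil.trans hlk)

lemma Covers.insert {S' : Finset ι} {s : ι} {k : ℕ} (hs : mem (k + 1) s)
    (h : Covers mem S' (Nat.findGreatest (¬ mem · s) k)) : Covers mem (insert s S') (k + 1) := by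
  intro i hi hik
  rcases le_or_gt i (Nat.findGreatest (¬ mem · s) k) with hiF | hFi
  · obtain ⟨t, ht, hit⟩ := h i hi hiF
    exact ⟨t, mem_insert_of_mem ht, hit⟩
  · refine ⟨s, mem_insert_self s S', ?_⟩
    rcases Nat.lt_or_eq_of_le hik with hik | rfl
    · exact not_not.1 (Nat.findGreatest_is_greatest hFi (Nat.lt_succ_iff.1 hik))
    · exact hs

lemma minCoverWeight_le (hw : ∀ s ∈ S, 0 ≤ w s) {S' : Finset ι} {k : ℕ} (hS' : S' ⊆ S)
    (h : Covers mem S' k) : minCoverWeight S w mem k ≤ ∑ s ∈ S', w s := by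
  refine csInf_le ⟨0, ?_⟩ ⟨S', hS', h, rfl⟩
  rintro _ ⟨T, hT, -, rfl⟩
  exact sum_nonneg fun s hs => hw s (hT hs)

lemma le_minCoverWeight {k : ℕ} {x : ℝ} (hS : Covers mem S k)
    (h : ∀ S' ⊆ S, Covers mem S' k → x ≤ ∑ s ∈ S', w s) : x ≤ minCoverWeight S w mem k := by
  refine le_csInf ⟨_, S, subset_rfl, hS, rfl⟩ ?_
  rintro _ ⟨S', hS', hc, rfl⟩
  exact h S' hS' hc

lemma minCoverWeight_zero (hw : ∀ s ∈ S, 0 ≤ w s) : minCoverWeight S w mem 0 = 0 := by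
  have hcov : ∀ S' : Finset ι, Covers mem S' 0 := fun _ i hi hi0 => absurd (hi.trans hi0) (by omega)
  refine le_antisymm ?_ (le_minCoverWeight (hcov S) fun S' hS' _ => ?_)
  · simpa using minCoverWeight_le hw (empty_subset S) (hcov ∅)
  · exact sum_nonneg fun s hs => hw s (hS' hs)

lemma minCoverWeight_succ_le (hw : ∀ s ∈ S, 0 ≤ w s) {k : ℕ} (hS : Covers mem S k) {s : ι}
    (hs : s ∈ S) (hks : mem (k + 1) s) :
    minCoverWeight S w mem (k + 1) ≤
      w s + minCoverWeight S w mem (Nat.findGreatest (¬ mem · s) k) := by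
  rw [← sub_le_iff_le_add']
  refine le_minCoverWeight (hS.mono (Nat.findGreatest_le k)) fun S' hS' hcov => ?_
  have hsum : ∑ t ∈ insert s S', w t ≤ w s + ∑ t ∈ S', w t := by
    by_cases hsS' : s ∈ S'
    · rw [insert_eq_of_mem hsS']
      linarith [hw s hs]
    · rw [sum_insert hsS']
  have := minCoverWeight_le hw (insert_subset hs hS') (hcov.insert hks)
  linarith

lemma exists_covers_erase {n k : ℕ} (hcross : HasCrossingProperty S mem n)
    (hkn : k + 1 ≤ n) {S' : Finset ι} (hS' : S' ⊆ S) (hcov : Covers mem S' (k + 1)) :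
    ∃ s ∈ S', mem (k + 1) s ∧ Covers mem (S'.erase s) (Nat.findGreatest (¬ mem · s) k) := by
  set F : ι → ℕ := fun s => Nat.findGreatest (¬ mem · s) k
  have hFle : ∀ s, F s ≤ k := fun s => Nat.findGreatest_le k
  have hmiss : ∀ s, F s ≠ 0 → ¬ mem (F s) s := fun s => Nat.findGreatest_of_ne_zero rfl
  have hhit : ∀ s j, F s < j → j ≤ k → mem j s := fun s j h₁ h₂ =>
    not_not.1 (Nat.findGreatest_is_greatest h₁ h₂)
  obtain ⟨s₀, hs₀, hks₀⟩ := hcov (k + 1) (by omega) le_rfl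
  obtain ⟨s, hsT, hmin⟩ :=
    exists_min_image (S'.filter (mem (k + 1))) F ⟨s₀, mem_filter.2 ⟨hs₀, hks₀⟩⟩
  obtain ⟨hs, hks⟩ := mem_filter.1 hsT
  have hFs_le := hFle s
  refine ⟨s, hs, hks, fun j hj (hjF : j ≤ F s) => ?_⟩
  by_contra! hnot
  have honly : ∀ t ∈ S', mem j t → t = s := fun t ht hjt => by
    by_contra hts
    exact hnot t (mem_erase.2 ⟨hts, ht⟩) hjt
  obtain ⟨t₀, ht₀, hjt₀⟩ := hcov j hj (by omega)
  have hjs : mem j s := honly t₀ ht₀ hjt₀ ▸ hjt₀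
  have hFs : ¬ mem (F s) s := hmiss s (by omega)
  have hjF : j < F s := lt_of_le_of_ne hjF fun h => hFs (h ▸ hjs)
  obtain ⟨t, ht, hFt⟩ := hcov (F s) (by omega) (by omega)
  have hts : t ≠ s := fun h => hFs (h ▸ hFt)
  have hjt : ¬ mem j t := fun h => hts (honly t ht h)
  have hkt : mem (k + 1) t :=
    (hcross s (hS' hs) t (hS' ht) j (F s) (k + 1) hj hjF (by omega) hkn hjs hks hFs
      hFt).resolve_left hjt
  have hFst : F s < F t := lt_of_le_of_ne (hmin t (mem_filter.2 ⟨ht, hkt⟩))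
    fun h => hmiss t (by omega) (h ▸ hFt)
  rcases hcross s (hS' hs) t (hS' ht) j (F s) (F t) hj hjF hFst ((hFle t).trans (by omega)) hjs
    (hhit s (F t) hFst (hFle t)) hFs hFt with h | h
  · exact hjt h
  · exact hmiss t (by omega) h

lemma deltaRec_succ_le {k : ℕ} {s : ι} (hs : s ∈ S) (hks : mem (k + 1) s) :
    deltaRec S w mem (k + 1) ≤ w s + deltaRec S w mem (Nat.findGreatest (¬ mem · s) k) := by
  rw [deltaRec]
  refine csInf_le (Set.Finite.bddBelow ?_) ⟨s, hs, hks, rfl⟩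
  refine (S.finite_toSet.image fun t =>
    w t + deltaRec S w mem (Nat.findGreatest (¬ mem · t) k)).subset ?_
  rintro _ ⟨t, ht, -, rfl⟩
  exact ⟨t, ht, rfl⟩

lemma le_deltaRec_succ {k : ℕ} {x : ℝ} (hk : ∃ s ∈ S, mem (k + 1) s)
    (h : ∀ s ∈ S, mem (k + 1) s → x ≤ w s + deltaRec S w mem (Nat.findGreatest (¬ mem · s) k)) :
    x ≤ deltaRec S w mem (k + 1) := by
  rw [deltaRec]
  obtain ⟨s, hs, hks⟩ := hk
  refine le_csInf ⟨_, s, hs, hks, rfl⟩ ?_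
  rintro _ ⟨t, ht, hkt, rfl⟩
  exact h t ht hkt

theorem deltaRec_eq_minCoverWeight (hw : ∀ s ∈ S, 0 ≤ w s) {n : ℕ} (hS : Covers mem S n)
    (hcross : HasCrossingProperty S mem n) {k : ℕ} (hk : k ≤ n) :
    deltaRec S w mem k = minCoverWeight S w mem k := by
  induction k using Nat.strong_induction_on with
  | _ k ih =>
  rcases k with _ | k
  · rw [deltaRec, minCoverWeight_zero hw]
  have ihF : ∀ s, deltaRec S w mem (Nat.findGreatest (¬ mem · s) k) =
      minCoverWeight S w mem (Nat.findGreatest (¬ mem · s) k) := fun s =>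
    ih _ (Nat.lt_succ_of_le (Nat.findGreatest_le k)) ((Nat.findGreatest_le k).trans (by omega))
  refine le_antisymm (le_minCoverWeight (hS.mono hk) fun S' hS' hcov => ?_)
    (le_deltaRec_succ (hS (k + 1) (by omega) hk) fun s hs hks => ?_)
  · obtain ⟨s, hs, hks, hcov'⟩ := exists_covers_erase hcross hk hS' hcov
    calc deltaRec S w mem (k + 1)
        ≤ w s + minCoverWeight S w mem (Nat.findGreatest (¬ mem · s) k) :=
          ihF s ▸ deltaRec_succ_le (hS' hs) hks
      _ ≤ w s + ∑ t ∈ S'.erase s, w t := by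
          gcongr; exact minCoverWeight_le hw ((erase_subset s S').trans hS') hcov'
      _ = ∑ t ∈ S', w t := add_sum_erase S' w hs
  · exact ihF s ▸ minCoverWeight_succ_le hw (hS.mono (by omega)) hs hks

end Cover

theorem deltaRec_eq_opt_general {ι : Type*} (S : Finset ι)
    (c : ι → EuclideanSpace ℝ (Fin 2)) (ρ : ℝ)
    (w : ι → ℝ) (hw : ∀ s ∈ S, 0 < w s)
    (n : ℕ) (p : ℕ → EuclideanSpace ℝ (Fin 2))
    (habove : ∀ i, 1 ≤ i → i ≤ n → 0 ≤ p i 1)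
    (hbelow : ∀ s ∈ S, c s 1 < 0)
    (hsorted : ∀ i j, 1 ≤ i → i < j → j ≤ n → p i 0 < p j 0)
    (hcov : ∀ i, 1 ≤ i → i ≤ n → ∃ s ∈ S, dist (p i) (c s) ≤ ρ) :
    deltaRec S w (fun i s => dist (p i) (c s) ≤ ρ) n =
      sInf {x : ℝ | ∃ S' : Finset ι, S' ⊆ S ∧
        (∀ i, 1 ≤ i → i ≤ n → ∃ s ∈ S', dist (p i) (c s) ≤ ρ) ∧
        x = ∑ s ∈ S', w s} := by
  have hcross : HasCrossingProperty S (fun i s => dist (p i) (c s) ≤ ρ) n :=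
    fun s hs t ht j f m hj hjf hfm hmn hjs hms hfs hft =>
      dist_le_or_dist_le_of_between (hbelow s hs) (hbelow t ht) (habove j hj (by omega))
        (habove f (by omega) (by omega)) (habove m (by omega) hmn)
        (hsorted j f hj hjf (by omega)) (hsorted f m (by omega) hfm hmn) hjs hms (not_le.1 hfs) hft
  exact deltaRec_eq_minCoverWeight (fun s hs => (hw s hs).le) hcov hcross le_rfl

/-- Correctness of the dynamic program for the line-separable weighted
unit-disk coverage problem: `δ_n` equals the minimum total weight of a subset
`S' ⊆ S` of disks covering all the points `p_1, …, p_n`.  The points are above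
the x-axis, sorted by (distinct) x-coordinates; the disks all have the same
radius `ρ` and centers strictly below the x-axis; every point is covered by at
least one disk. -/
theorem deltaRec_eq_opt {ι : Type*} (S : Finset ι)
    (c : ι → EuclideanSpace ℝ (Fin 2)) (ρ : ℝ) (hρ : 0 < ρ)
    (w : ι → ℝ) (hw : ∀ s ∈ S, 0 < w s)
    (n : ℕ) (p : ℕ → EuclideanSpace ℝ (Fin 2))
    (habove : ∀ i, 1 ≤ i → i ≤ n → 0 ≤ p i 1)
    (hbelow : ∀ s ∈ S, c s 1 < 0)
    (hsorted : ∀ i j, 1 ≤ i → i < j → j ≤ n → p i 0 < p j 0)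
    (hcov : ∀ i, 1 ≤ i → i ≤ n → ∃ s ∈ S, dist (p i) (c s) ≤ ρ) :
    deltaRec S w (fun i s => dist (p i) (c s) ≤ ρ) n =
      sInf {x : ℝ | ∃ S' : Finset ι, S' ⊆ S ∧
        (∀ i, 1 ≤ i → i ≤ n → ∃ s ∈ S', dist (p i) (c s) ≤ ρ) ∧
        x = ∑ s ∈ S', w s} :=
  deltaRec_eq_opt_general S c ρ w hw n p habove hbelow hsorted hcov
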